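/- arXiv:2505.05984 — 3 statements merged into one kernel-verified Lean document; each statement's English description precedes it below -/
import Mathlib

section
/- For every natural number n ≥ 1 and real t, the exponential generating series identity ∑_{n=0}^∞ (α^n/n!) * m_n(t) = ₁F₁(1-α; 2; -α t) holds as an identity of formal power series in α (equivalently, for all complex α), where m_n(t) := n! * ∑_{j=⌈n/2⌉}^{n} t^j/(j!(1+j)!) * s(1+j, n+1-j) and ₁F₁(a;b;x) = ∑_{j≥0} (a^{(j)}/b^{(j)}) x^j/j! is Kummer's confluent hypergeometric function. -/
/-- Signed Stirling numbers of the first kind. -/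
def stirlingS1 : ℕ → ℕ → ℤ
  | 0, 0 => 1
  | 0, _ + 1 => 0
  | _ + 1, 0 => 0
  | n + 1, k + 1 => stirlingS1 n k - n * stirlingS1 n (k + 1)

/-- Kummer's confluent hypergeometric function `₁F₁(a;b;x)` as a sum over `ℂ`. -/
noncomputable def kummerF (a b x : ℂ) : ℂ :=
  ∑' j : ℕ, ((ascPochhammer ℂ j).eval a / (ascPochhammer ℂ j).eval b) * x ^ j /
    (j.factorial : ℂ)

/-- The moments `mₙ(t) = n! ∑_{j=⌈n/2⌉}^n tʲ/(j!(1+j)!) s(1+j, n+1-j)`. -/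
noncomputable def momPoly (n : ℕ) (t : ℝ) : ℂ :=
  (n.factorial : ℂ) * ∑ j ∈ Finset.Icc ((n + 1) / 2) n,
    (t : ℂ) ^ j / ((j.factorial : ℂ) * ((1 + j).factorial : ℂ)) *
      (stirlingS1 (1 + j) (n + 1 - j) : ℂ)

/-!
Expand the series as a double series `G(j, n) = tʲ/(j!(1+j)!) · αⁿ s(1+j, n+1-j)`.
For fixed `n` only `⌈n/2⌉ ≤ j ≤ n` contribute, and the `j`-sum is `αⁿ mₙ(t)/n!`.
For fixed `j`, since `descPochhammer (j+1) = X · (descPochhammer j).comp (X - 1)`, the `n`-sum is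
`tʲ/(j!(1+j)!) · αʲ (α-1)(α-2)⋯(α-j) = tʲ/(j!(1+j)!) · (-α)ʲ (1-α)^{(j)}`, which is the `j`-th
Kummer term because `2^{(j)} = (1+j)!`. The double series converges absolutely: `|s|` are the
unsigned Stirling numbers, so the same identity at `-‖α‖` bounds the absolute row sums by
`(|t| ‖α‖ (1+‖α‖))ʲ / j!`.
-/

open Finset Polynomial

theorem stirlingS1_eq_zero_of_lt : ∀ {m k : ℕ}, m < k → stirlingS1 m k = 0
  | 0, _ + 1, _ => rfl
  | m + 1, k + 1, h => by
    simp [stirlingS1, stirlingS1_eq_zero_of_lt (by omega : m < k),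
      stirlingS1_eq_zero_of_lt (by omega : m < k + 1)]

theorem stirlingS1_zero_right {m : ℕ} (hm : m ≠ 0) : stirlingS1 m 0 = 0 := by
  obtain ⟨m, rfl⟩ := Nat.exists_eq_succ_of_ne_zero hm
  rfl

theorem stirlingS1_eq_neg_one_pow_mul_stirlingFirst :
    ∀ m k : ℕ, stirlingS1 m k = (-1) ^ (m + k) * Nat.stirlingFirst m k
  | 0, 0 => rfl
  | 0, _ + 1 => by simp [stirlingS1]
  | _ + 1, 0 => by simp [stirlingS1]
  | m + 1, k + 1 => by
    rw [stirlingS1, Nat.stirlingFirst_succ_succ, stirlingS1_eq_neg_one_pow_mul_stirlingFirst m k,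
      stirlingS1_eq_neg_one_pow_mul_stirlingFirst m (k + 1)]
    push_cast
    ring

theorem coeff_descPochhammer {R : Type*} [Ring R] (m k : ℕ) :
    (descPochhammer R m).coeff k = stirlingS1 m k := by
  induction m generalizing k with
  | zero => cases k <;> simp [stirlingS1, coeff_one]
  | succ m ih =>
    cases k with
    | zero => simp [stirlingS1, coeff_zero_eq_eval_zero]
    | succ k =>
      rw [descPochhammer_succ_right, ← C_eq_natCast, coeff_mul_X_sub_C, ih, ih, stirlingS1]
      push_cast
      rw [Nat.cast_comm]

section CommRing

variable {R : Type*} [CommRing R]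

theorem sum_stirlingS1_succ_mul_pow (m : ℕ) (x : R) :
    ∑ i ∈ range (m + 1), (stirlingS1 (m + 1) (i + 1) : R) * x ^ i =
      (-1) ^ m * (ascPochhammer R m).eval (1 - x) := by
  set p := (descPochhammer R m).comp (X - 1)
  have hcoeff : ∀ i, p.coeff i = stirlingS1 (m + 1) (i + 1) := fun i => by
    rw [← coeff_descPochhammer, descPochhammer_succ_left, coeff_X_mul]
  have hdeg : p.natDegree < m + 1 := Nat.lt_succ_of_le <| natDegree_le_iff_coeff_eq_zero.2
    fun N hN => by rw [hcoeff, stirlingS1_eq_zero_of_lt (by omega), Int.cast_zero]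
  calc ∑ i ∈ range (m + 1), (stirlingS1 (m + 1) (i + 1) : R) * x ^ i = p.eval x := by
        simp only [eval_eq_sum_range' hdeg, hcoeff]
    _ = (-1) ^ m * (ascPochhammer R m).eval (1 - x) := by
        rw [eval_comp, eval_sub, eval_X, eval_one, show 1 - x = -(x - 1) by ring,
          ascPochhammer_eval_neg_eq_descPochhammer, ← mul_assoc, ← mul_pow]
        simp

variable [TopologicalSpace R] [IsTopologicalRing R]

theorem hasSum_pow_mul_stirlingS1 (j : ℕ) (x : R) :
    HasSum (fun n => x ^ n * (stirlingS1 (1 + j) (n + 1 - j) : R))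
      ((-x) ^ j * (ascPochhammer R j).eval (1 - x)) := by
  have hlow : ∑ n ∈ range j, x ^ n * (stirlingS1 (1 + j) (n + 1 - j) : R) = 0 :=
    sum_eq_zero fun n hn => by
      rw [mem_range] at hn
      rw [show n + 1 - j = 0 by omega, stirlingS1_zero_right (by omega), Int.cast_zero, mul_zero]
  rw [← hasSum_nat_add_iff' j, hlow, sub_zero]
  have hshift : ∀ i, x ^ (i + j) * (stirlingS1 (1 + j) (i + j + 1 - j) : R) =
      x ^ j * ((stirlingS1 (j + 1) (i + 1) : R) * x ^ i) := fun i => by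
    rw [show i + j + 1 - j = i + 1 by omega, add_comm 1 j, pow_add]
    ring
  simp only [hshift]
  rw [neg_pow, mul_comm ((-1) ^ j) (x ^ j), mul_assoc, ← sum_stirlingS1_succ_mul_pow]
  refine (hasSum_sum_of_ne_finset_zero fun i hi => ?_).mul_left _
  rw [mem_range] at hi
  rw [stirlingS1_eq_zero_of_lt (by omega), Int.cast_zero, zero_mul]

end CommRing

theorem hasSum_pow_mul_abs_stirlingS1 (j : ℕ) (r : ℝ) :
    HasSum (fun n => r ^ n * |(stirlingS1 (1 + j) (n + 1 - j) : ℝ)|)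
      (r ^ j * (ascPochhammer ℝ j).eval (1 + r)) := by
  have hterm : ∀ n, r ^ n * |(stirlingS1 (1 + j) (n + 1 - j) : ℝ)| =
      (-r) ^ n * (stirlingS1 (1 + j) (n + 1 - j) : ℝ) := fun n => by
    rcases lt_or_ge n j with hn | hn
    · rw [show n + 1 - j = 0 by omega, stirlingS1_zero_right (by omega)]
      simp
    · obtain ⟨i, rfl⟩ := Nat.exists_eq_add_of_le hn
      rw [show j + i + 1 - j = i + 1 by omega, stirlingS1_eq_neg_one_pow_mul_stirlingFirst]
      push_cast
      rw [abs_mul, abs_pow, abs_neg, abs_one, one_pow, one_mul, Nat.abs_cast, neg_pow r]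
      ring_nf
      simp [pow_mul']
  simp_rw [hterm]
  simpa [sub_neg_eq_add] using hasSum_pow_mul_stirlingS1 j (-r)

theorem ascPochhammer_eval_le_pow_mul_factorial {x : ℝ} (hx : 1 ≤ x) (j : ℕ) :
    (ascPochhammer ℝ j).eval x ≤ x ^ j * j.factorial := by
  induction j with
  | zero => simp
  | succ j ih =>
    rw [ascPochhammer_succ_eval, pow_succ, Nat.factorial_succ]
    push_cast
    have hpos : 0 ≤ (ascPochhammer ℝ j).eval x := (ascPochhammer_pos j x (by linarith)).le
    have hj : x + j ≤ x * (j + 1) := by nlinarith [(j.cast_nonneg : (0 : ℝ) ≤ j)]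
    calc (ascPochhammer ℝ j).eval x * (x + j) ≤ x ^ j * j.factorial * (x * (j + 1)) :=
          mul_le_mul ih hj (by positivity) (by positivity)
      _ = _ := by ring

-- For `n < j` the truncated `n + 1 - j` is `0` and `s(1+j, 0) = 0`, so the kernel vanishes there.
noncomputable def egfKernel (t : ℝ) (α : ℂ) (p : ℕ × ℕ) : ℂ :=
  (t : ℂ) ^ p.1 / ((p.1.factorial : ℂ) * ((1 + p.1).factorial : ℂ)) *
    (α ^ p.2 * (stirlingS1 (1 + p.1) (p.2 + 1 - p.1) : ℂ))

section Kernel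

variable (t : ℝ) (α : ℂ)

theorem hasSum_egfKernel_row (j : ℕ) :
    HasSum (fun n => egfKernel t α (j, n))
      ((ascPochhammer ℂ j).eval (1 - α) / (ascPochhammer ℂ j).eval 2 * (-α * t) ^ j /
        (j.factorial : ℂ)) := by
  have htwo : (ascPochhammer ℂ j).eval 2 = ((1 + j).factorial : ℂ) := by
    simpa [one_add_one_eq_two] using factorial_mul_ascPochhammer ℂ 1 j
  have hj : (j.factorial : ℂ) ≠ 0 := Nat.cast_ne_zero.2 j.factorial_ne_zero
  have hj1 : ((1 + j).factorial : ℂ) ≠ 0 := Nat.cast_ne_zero.2 (1 + j).factorial_ne_zero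
  rw [show (ascPochhammer ℂ j).eval (1 - α) / (ascPochhammer ℂ j).eval 2 * (-α * t) ^ j /
      (j.factorial : ℂ) = (t : ℂ) ^ j / ((j.factorial : ℂ) * ((1 + j).factorial : ℂ)) *
      ((-α) ^ j * (ascPochhammer ℂ j).eval (1 - α)) by rw [htwo, mul_pow]; field_simp]
  simp only [egfKernel]
  exact (hasSum_pow_mul_stirlingS1 j α).mul_left _

theorem hasSum_egfKernel_column (n : ℕ) :
    HasSum (fun j => egfKernel t α (j, n)) (α ^ n / (n.factorial : ℂ) * momPoly n t) := by
  have hzero : ∀ j ∉ Icc ((n + 1) / 2) n, egfKernel t α (j, n) = 0 := fun j hj => by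
    rw [mem_Icc, not_and_or, not_le, not_le] at hj
    have hs : stirlingS1 (1 + j) (n + 1 - j) = 0 := by
      rcases hj with hj | hj
      · exact stirlingS1_eq_zero_of_lt (by omega)
      · rw [show n + 1 - j = 0 by omega, stirlingS1_zero_right (by omega)]
    simp [egfKernel, hs]
  have hn : (n.factorial : ℂ) ≠ 0 := Nat.cast_ne_zero.2 n.factorial_ne_zero
  rw [momPoly, ← mul_assoc, div_mul_cancel₀ _ hn, mul_sum]
  have hterm : ∀ j, α ^ n * ((t : ℂ) ^ j / ((j.factorial : ℂ) * ((1 + j).factorial : ℂ)) *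
      (stirlingS1 (1 + j) (n + 1 - j) : ℂ)) = egfKernel t α (j, n) := fun j => by
    simp only [egfKernel]
    ring
  simp_rw [hterm]
  exact hasSum_sum_of_ne_finset_zero hzero

theorem summable_egfKernel : Summable (egfKernel t α) := by
  set r := ‖α‖
  have hrow : ∀ j, HasSum (fun n => ‖egfKernel t α (j, n)‖)
      (|t| ^ j / (j.factorial * (1 + j).factorial) * (r ^ j * (ascPochhammer ℝ j).eval (1 + r))) :=
    fun j => by
      have hnorm : (fun n => ‖egfKernel t α (j, n)‖) = fun n => |t| ^ j /
          (j.factorial * (1 + j).factorial) * (r ^ n * |(stirlingS1 (1 + j) (n + 1 - j) : ℝ)|) :=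
        funext fun n => by simp [egfKernel, r]
      rw [hnorm]
      exact (hasSum_pow_mul_abs_stirlingS1 j r).mul_left _
  refine Summable.of_norm <| (summable_prod_of_nonneg fun _ => norm_nonneg _).2
    ⟨fun j => (hrow j).summable, ?_⟩
  simp_rw [(hrow _).tsum_eq]
  refine Summable.of_nonneg_of_le (fun j => ?_) (fun j => ?_)
    (Real.summable_pow_div_factorial (|t| * r * (1 + r)))
  · have hpos := ascPochhammer_pos j (1 + r) (by positivity)
    positivity
  · have hasc := ascPochhammer_eval_le_pow_mul_factorial (x := 1 + r) (by simp [r]) j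
    have hfac : (j.factorial : ℝ) ≤ (1 + j).factorial := by
      exact_mod_cast Nat.factorial_le (by omega)
    have hj : (j.factorial : ℝ) ≠ 0 := Nat.cast_ne_zero.2 j.factorial_ne_zero
    calc |t| ^ j / (j.factorial * (1 + j).factorial) * (r ^ j * (ascPochhammer ℝ j).eval (1 + r))
        ≤ |t| ^ j / (j.factorial * (1 + j).factorial) * (r ^ j * ((1 + r) ^ j * j.factorial)) := by
          gcongr
      _ = (|t| * r * (1 + r)) ^ j / (1 + j).factorial := by
          rw [mul_pow, mul_pow]
          field_simp
      _ ≤ (|t| * r * (1 + r)) ^ j / j.factorial := by gcongr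

end Kernel

theorem egf_moments_eq_kummer (t : ℝ) (α : ℂ) :
    HasSum (fun n : ℕ => α ^ n / (n.factorial : ℂ) * momPoly n t)
      (kummerF (1 - α) 2 (-α * (t : ℂ))) := by
  have hsum := (summable_egfKernel t α).hasSum
  have hrows := hsum.prod_fiberwise (hasSum_egfKernel_row t α)
  have hcols := ((Equiv.prodComm ℕ ℕ).hasSum_iff.2 hsum).prod_fiberwise
    (hasSum_egfKernel_column t α)
  rw [kummerF, hrows.tsum_eq]
  exact hcols
end

section
/- Kummer's transformation: for all real (or complex) a, x and all b that is not a nonpositive integer, ₁F₁(a; b; x) = e^x * ₁F₁(b - a; b; -x). -/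
open Finset Filter Polynomial Topology

namespace Polynomial

variable {R : Type*}

theorem descPochhammer_smeval_eq_eval [Ring R] (r : R) (n : ℕ) :
    (descPochhammer ℤ n).smeval r = (descPochhammer R n).eval r := by
  rw [descPochhammer_smeval_eq_ascPochhammer, ascPochhammer_smeval_eq_eval,
    descPochhammer_eval_eq_ascPochhammer]

theorem descPochhammer_eval_add [CommRing R] (r s : R) (n : ℕ) :
    (descPochhammer R n).eval (r + s) = ∑ ij ∈ antidiagonal n,
      n.choose ij.1 * ((descPochhammer R ij.1).eval r * (descPochhammer R ij.2).eval s) := by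
  simpa only [descPochhammer_smeval_eq_eval] using
    Ring.descPochhammer_smeval_add n (Commute.all r s)

theorem ascPochhammer_eval_add [CommSemiring R] (r : R) (m n : ℕ) :
    (ascPochhammer R (m + n)).eval r =
      (ascPochhammer R m).eval r * (ascPochhammer R n).eval (r + m) := by
  simp [← ascPochhammer_mul R m n, eval_comp]

theorem ascPochhammer_eval_eq_sum_antidiagonal [CommRing R] (a b : R) (n : ℕ) :
    (ascPochhammer R n).eval a = ∑ ij ∈ antidiagonal n,
      n.choose ij.1 * ((ascPochhammer R ij.1).eval (b + ij.2) *
        (descPochhammer R ij.2).eval (a - b)) := by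
  have h := descPochhammer_eval_add (b + n - 1) (a - b) n
  rw [descPochhammer_eval_eq_ascPochhammer, show b + n - 1 + (a - b) - n + 1 = a by ring] at h
  refine h.trans <| sum_congr rfl fun ij hij => ?_
  rw [HasAntidiagonal.mem_antidiagonal] at hij
  rw [descPochhammer_eval_eq_ascPochhammer, ← hij]
  congr 3
  push_cast
  ring

end Polynomial

theorem summable_norm_of_succ_eq_mul {R : Type*} [SeminormedRing R] {f r : ℕ → R}
    (hf : ∀ n, f (n + 1) = f n * r n) (hr : Tendsto r atTop (𝓝 0)) :
    Summable fun n => ‖f n‖ := by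
  refine summable_of_ratio_norm_eventually_le (r := 1 / 2) (by norm_num) ?_
  filter_upwards [(tendsto_zero_iff_norm_tendsto_zero.1 hr).eventually_lt_const
    (by norm_num : (0 : ℝ) < 1 / 2)] with n hn
  rw [norm_norm, norm_norm, hf, mul_comm (1 / 2)]
  exact (norm_mul_le _ _).trans (mul_le_mul_of_nonneg_left hn.le (norm_nonneg _))

noncomputable def kummerTerm (a b x : ℂ) (j : ℕ) : ℂ :=
  (ascPochhammer ℂ j).eval a / (ascPochhammer ℂ j).eval b * x ^ j / (j.factorial : ℂ)

theorem kummerTerm_succ (a b x : ℂ) (n : ℕ) :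
    kummerTerm a b x (n + 1) = kummerTerm a b x n * ((a + n) / (b + n) * (x / (n + 1))) := by
  simp only [kummerTerm, ascPochhammer_succ_eval, pow_succ, Nat.factorial_succ, Nat.cast_mul,
    Nat.cast_succ, div_eq_mul_inv, mul_inv]
  ring

theorem summable_norm_kummerTerm (a b x : ℂ) : Summable fun j => ‖kummerTerm a b x j‖ := by
  refine summable_norm_of_succ_eq_mul (kummerTerm_succ a b x) ?_
  have h := (tendsto_add_mul_div_add_mul_atTop_nhds a b 1 one_ne_zero).mul
    (tendsto_add_mul_div_add_mul_atTop_nhds x 1 0 one_ne_zero)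
  simp only [one_mul, zero_mul, add_zero, div_one, mul_zero, add_comm (1 : ℂ)] at h
  exact h

theorem exp_mul_kummerF (c b x : ℂ) :
    Complex.exp x * kummerF c b (-x) =
      ∑' n, ∑ ij ∈ antidiagonal n, x ^ ij.1 / ij.1.factorial * kummerTerm c b (-x) ij.2 := by
  rw [Complex.exp_eq_exp_ℂ, NormedSpace.exp_eq_tsum_div]
  exact tsum_mul_tsum_eq_tsum_sum_antidiagonal_of_summable_norm
    (NormedSpace.norm_expSeries_div_summable x) (summable_norm_kummerTerm c b (-x))

theorem sum_antidiagonal_pow_div_factorial_mul_kummerTerm {a b : ℂ}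
    (hb : ∀ k : ℕ, b ≠ -(k : ℂ)) (x : ℂ) (n : ℕ) :
    ∑ ij ∈ antidiagonal n, x ^ ij.1 / ij.1.factorial * kummerTerm (b - a) b (-x) ij.2 =
      kummerTerm a b x n := by
  have hpoch (m : ℕ) : (ascPochhammer ℂ m).eval b ≠ 0 := by
    simp only [ne_eq, ascPochhammer_eval_eq_zero_iff, not_exists, not_and]
    exact fun k _ hk => hb k (by rw [hk, neg_neg])
  rw [kummerTerm, ascPochhammer_eval_eq_sum_antidiagonal a b, sum_div, sum_mul, sum_div]
  refine sum_congr rfl fun ⟨i, j⟩ hij => ?_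
  obtain rfl : i + j = n := HasAntidiagonal.mem_antidiagonal.1 hij
  have hsplit : (ascPochhammer ℂ (i + j)).eval b =
      (ascPochhammer ℂ j).eval b * (ascPochhammer ℂ i).eval (b + j) := by
    rw [add_comm, ascPochhammer_eval_add]
  obtain ⟨hbj, hbji⟩ := mul_ne_zero_iff.1 (hsplit ▸ hpoch (i + j))
  have hchoose : ((i + j).choose j : ℂ) ≠ 0 := Nat.cast_ne_zero.2 (Nat.choose_pos le_add_self).ne'
  rw [kummerTerm, hsplit, ← neg_sub a b, ascPochhammer_eval_neg_eq_descPochhammer, neg_pow x,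
    ← Nat.add_choose_mul_factorial_mul_factorial i j, Nat.choose_symm_add]
  simp only [Nat.cast_mul]
  field_simp
  rw [pow_right_comm, neg_one_sq, one_pow]
  ring

theorem kummer_transformation (a b x : ℂ) (hb : ∀ k : ℕ, b ≠ -(k : ℂ)) :
    kummerF a b x = Complex.exp x * kummerF (b - a) b (-x) := by
  rw [exp_mul_kummerF]
  exact tsum_congr fun n => (sum_antidiagonal_pow_div_factorial_mul_kummerTerm hb x n).symm
end

section
/- For every integer j ≥ 2 and every complex y with 0 < |y| < 1/2, the contour integral ∫_{|x|=1/2} x^{j-2} (log((1+x)/(1+y)))^j (x-y)^{-j} dx equals 0. -/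
/-!
On the circle, `log ((1 + x) / (1 + y)) ^ j * (x - y) ^ (-j)` is the `j`-th power of the slope
of `z ↦ log ((1 + z) / (1 + y))` between `y` and `x`, since that function vanishes at `y`. The
slope extends holomorphically across `x = y`, and `(1 + z) / (1 + y)` stays in the right half-plane
for `z` in the closed disk, so the integrand agrees on the circle with a function holomorphic on
the closed disk, and Cauchy's theorem gives `0`.
-/

open Complex Metric

theorem circleIntegral_pow_mul_sub_zpow_neg_smul_eq_zero {E : Type*} [NormedAddCommGroup E]
    [NormedSpace ℂ E] {c y : ℂ} {R : ℝ} {f : ℂ → ℂ} {g : ℂ → E} (n : ℕ) (hy : y ∈ ball c R)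
    (hf : DifferentiableOn ℂ f (closedBall c R)) (hg : DifferentiableOn ℂ g (closedBall c R))
    (hfy : f y = 0) :
    (∮ x in C(c, R), (f x ^ n * (x - y) ^ (-(n : ℤ))) • g x) = 0 := by
  have hslope : DifferentiableOn ℂ (dslope f y) (closedBall c R) :=
    (differentiableOn_dslope (closedBall_mem_nhds_of_mem hy)).2 hf
  have hR : 0 ≤ R := dist_nonneg.trans (mem_ball.1 hy).le
  calc (∮ x in C(c, R), (f x ^ n * (x - y) ^ (-(n : ℤ))) • g x)
      = ∮ x in C(c, R), dslope f y x ^ n • g x := by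
        refine circleIntegral.integral_congr hR fun x hx ↦ ?_
        have hxy : x ≠ y := by
          rintro rfl
          exact (mem_ball.1 hy).ne (mem_sphere.1 hx)
        rw [dslope_of_ne f hxy, slope_def_field, hfy, sub_zero, div_pow, zpow_neg, zpow_natCast,
          div_eq_mul_inv]
    _ = 0 := ((hslope.pow n).smul hg).diffContOnCl_ball subset_rfl |>.circleIntegral_eq_zero hR

theorem div_mem_slitPlane_of_norm_sub_one {w v : ℂ} (hw : ‖w - 1‖ ≤ 1 / 2)
    (hv : ‖v - 1‖ < 1 / 2) : w / v ∈ slitPlane := by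
  have hv0 : v ≠ 0 := by
    rintro rfl
    norm_num at hv
  have hwre := abs_le.1 ((abs_re_le_norm _).trans hw)
  have hwim := abs_le.1 ((abs_im_le_norm _).trans hw)
  have hvre := abs_lt.1 ((abs_re_le_norm _).trans_lt hv)
  have hvim := abs_lt.1 ((abs_im_le_norm _).trans_lt hv)
  simp only [sub_re, sub_im, one_re, one_im, sub_zero] at hwre hwim hvre hvim
  refine Or.inl ?_
  rw [div_re, ← add_div]
  refine div_pos ?_ (normSq_pos.2 hv0)
  -- `re w * re v > 1/4 ≥ |im w * im v|`
  nlinarith [mul_nonneg (by linarith : (0 : ℝ) ≤ 1 / 2 - w.im)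
      (by linarith : (0 : ℝ) ≤ 1 / 2 - v.im),
    mul_nonneg (by linarith : (0 : ℝ) ≤ 1 / 2 + w.im) (by linarith : (0 : ℝ) ≤ 1 / 2 + v.im)]

theorem differentiableOn_log_one_add_div_one_add {y : ℂ} (hy : ‖y‖ < 1 / 2) :
    DifferentiableOn ℂ (fun z ↦ log ((1 + z) / (1 + y))) (closedBall 0 (1 / 2)) := by
  intro z hz
  have hz' : ‖1 + z - 1‖ ≤ 1 / 2 := by simpa using hz
  have hy' : ‖1 + y - 1‖ < 1 / 2 := by simpa using hy
  exact ((differentiableAt_log (div_mem_slitPlane_of_norm_sub_one hz' hy')).comp z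
    (((differentiableAt_id (x := z)).const_add 1).div_const (1 + y))).differentiableWithinAt

theorem contour_integral_log_pow_vanishes_general (j : ℕ) (y : ℂ)
    (hy : ‖y‖ < 1 / 2) :
    (∮ x in C(0, 1 / 2),
        x ^ (j - 2) * (Complex.log ((1 + x) / (1 + y))) ^ j * (x - y) ^ (-(j : ℤ))) = 0 := by
  have hy1 : 1 + y ≠ 0 := by
    intro h
    rw [eq_neg_of_add_eq_zero_right h] at hy
    norm_num at hy
  have key := circleIntegral_pow_mul_sub_zpow_neg_smul_eq_zero j (mem_ball_zero_iff.2 hy)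
    (differentiableOn_log_one_add_div_one_add hy) (differentiable_pow (j - 2)).differentiableOn
    (by simp [div_self hy1])
  convert key using 3 with x
  rw [smul_eq_mul]
  ring

theorem contour_integral_log_pow_vanishes (j : ℕ) (hj : 2 ≤ j) (y : ℂ)
    (hy0 : 0 < ‖y‖) (hy : ‖y‖ < 1 / 2) :
    (∮ x in C(0, 1 / 2),
        x ^ (j - 2) * (Complex.log ((1 + x) / (1 + y))) ^ j * (x - y) ^ (-(j : ℤ))) = 0 :=
  contour_integral_log_pow_vanishes_general j y hy
end
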